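/- Let 0 ≤ λ_i ≤ 1 with λ_1 + λ_2 < 1 and λ_2 + λ_3 < 1, and let the 3-queue path-graph system evolve under the inner-queue-priority MSM policy π̃_IQ defined by: S(t) = (1,0,1) if Q_1(t) > 0 and Q_3(t) > 0; otherwise S(t) = (0,1,0) if Q_2(t) > 0; otherwise S(t) = (1,0,1). Then limsup_{T→∞} (1/T) ∑_{t=0}^{T−1} ∑_{i=1}^{3} E[Q_i(t)] < ∞, i.e., π̃_IQ is throughput-optimal. -/

import Mathlib

open MeasureTheory ProbabilityTheory Filter
open scoped ENNReal

/-- The inner-queue-priority MSM policy π̃_IQ for the 3-queue path graph: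
serve queues 1 and 3 if both are nonempty; else serve queue 2 if nonempty;
else serve queues 1 and 3. -/
def piIQtilde (q : Fin 3 → ℕ) : Fin 3 → ℕ :=
  if 0 < q 0 ∧ 0 < q 2 then ![1, 0, 1]
  else if 0 < q 1 then ![0, 1, 0]
  else ![1, 0, 1]

/-!
Under `piIQtilde` every interfering pair of queues, `{1, 2}` and `{2, 3}`, loses exactly one
packet in each slot in which it is nonempty. So each pair workload `X = Qᵢ + Qⱼ` is a
single-server queue `X (t + 1) = (X t - 1) + (Aᵢ t + Aⱼ t)`; its arrivals in slot `t` have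
mean `ρ = λᵢ + λⱼ < 1` and are independent of `X t`, which is determined by earlier arrivals. The Lyapunov function `X²` then has drift
at most `-2 (1 - ρ) X + const`, which bounds the Cesàro means of `E[X]`; finally
`Q₁ + Q₂ + Q₃ ≤ (Q₁ + Q₂) + (Q₂ + Q₃)`.
-/

theorem piIQtilde_serves_pair01 (q : Fin 3 → ℕ) :
    (q 0 - piIQtilde q 0) + (q 1 - piIQtilde q 1) = q 0 + q 1 - 1 := by
  unfold piIQtilde
  split_ifs <;> simp only [Matrix.cons_val_zero, Matrix.cons_val_one, tsub_zero] <;> omega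

theorem piIQtilde_serves_pair12 (q : Fin 3 → ℕ) :
    (q 1 - piIQtilde q 1) + (q 2 - piIQtilde q 2) = q 1 + q 2 - 1 := by
  unfold piIQtilde
  split_ifs <;> simp only [Matrix.cons_val_one, Matrix.cons_val, tsub_zero] <;> omega

theorem queue_sq_step_le {x c K : ℕ} (hc : c ≤ K) :
    (x - 1 + c) ^ 2 + 2 * x ≤ x ^ 2 + 2 * (x * c) + (K ^ 2 + 1) := by
  have hcK : c ^ 2 ≤ K ^ 2 := Nat.pow_le_pow_left hc 2
  rcases x with _ | n
  · simpa using hcK.trans (Nat.le_succ _)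
  · simp only [Nat.add_sub_cancel]; nlinarith

theorem two_mul_one_sub_ne_zero {ρ : ℝ≥0∞} (hρ : ρ < 1) : 2 * (1 - ρ) ≠ 0 :=
  mul_ne_zero two_ne_zero (tsub_pos_of_lt hρ).ne'

theorem sum_le_div_mul_of_drift {V e : ℕ → ℝ≥0∞} {δ c : ℝ≥0∞} (hδ0 : δ ≠ 0) (hδ : δ ≠ ⊤)
    (hV0 : V 0 = 0) (hdrift : ∀ t, V (t + 1) + δ * e t ≤ V t + c) (T : ℕ) :
    ∑ t ∈ Finset.range T, e t ≤ c / δ * T := by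
  have htel : ∀ T : ℕ, V T + δ * ∑ t ∈ Finset.range T, e t ≤ c * T := by
    intro T
    induction T with
    | zero => simp [hV0]
    | succ T ih =>
      calc V (T + 1) + δ * ∑ t ∈ Finset.range (T + 1), e t
          = (V (T + 1) + δ * e T) + δ * ∑ t ∈ Finset.range T, e t := by
            rw [Finset.sum_range_succ]; ring
        _ ≤ (V T + δ * ∑ t ∈ Finset.range T, e t) + c := by
            grw [hdrift T]; rw [add_right_comm]
        _ ≤ c * T + c := by grw [ih]
        _ = c * (T + 1 : ℕ) := by push_cast; ring
  rw [mul_comm, ← mul_div_assoc, ENNReal.le_div_iff_mul_le (.inl hδ0) (.inl hδ), mul_comm,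
    mul_comm (T : ℝ≥0∞)]
  exact le_add_self.trans (htel T)

theorem limsup_sum_div_lt_top {e : ℕ → ℝ≥0∞} {C : ℝ≥0∞} (hC : C ≠ ⊤)
    (h : ∀ T : ℕ, ∑ t ∈ Finset.range T, e t ≤ C * T) :
    limsup (fun T : ℕ => (∑ t ∈ Finset.range T, e t) / (T : ℝ≥0∞)) atTop < ⊤ :=
  (limsup_le_of_le (by isBoundedDefault)
    (.of_forall fun T => ENNReal.div_le_of_le_mul (h T))).trans_lt hC.lt_top

section Queue

variable {Ω : Type*} {X B : ℕ → Ω → ℕ} {K : ℕ}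

theorem queue_le_mul (hBK : ∀ t ω, B t ω ≤ K) (hX0 : ∀ ω, X 0 ω = 0)
    (hrec : ∀ t ω, X (t + 1) ω = X t ω - 1 + B t ω) (t : ℕ) (ω : Ω) : X t ω ≤ K * t := by
  induction t with
  | zero => simp [hX0]
  | succ t ih => rw [hrec, mul_add_one]; have := hBK t ω; omega

theorem measurable_queue [MeasurableSpace Ω] (hB : ∀ t, Measurable (B t))
    (hX0 : ∀ ω, X 0 ω = 0) (hrec : ∀ t ω, X (t + 1) ω = X t ω - 1 + B t ω) (t : ℕ) :
    Measurable (X t) := by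
  induction t with
  | zero => simp only [funext hX0]; exact measurable_const
  | succ t ih => simp only [funext (hrec t)]; have := hB t; fun_prop

variable [MeasurableSpace Ω] {μ : Measure Ω} [IsProbabilityMeasure μ]

theorem lintegral_queue_sq_add_le (hB : ∀ t, Measurable (B t)) (hBK : ∀ t ω, B t ω ≤ K)
    (hX0 : ∀ ω, X 0 ω = 0) (hrec : ∀ t ω, X (t + 1) ω = X t ω - 1 + B t ω) (t : ℕ) :
    ∫⁻ ω, (X (t + 1) ω : ℝ≥0∞) ^ 2 ∂μ + 2 * ∫⁻ ω, (X t ω : ℝ≥0∞) ∂μ ≤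
      ∫⁻ ω, (X t ω : ℝ≥0∞) ^ 2 ∂μ + 2 * ∫⁻ ω, (X t ω : ℝ≥0∞) * B t ω ∂μ + (K ^ 2 + 1) := by
  have hX := measurable_queue hB hX0 hrec
  have hpt : ∀ ω, (X (t + 1) ω : ℝ≥0∞) ^ 2 + 2 * X t ω ≤
      (X t ω : ℝ≥0∞) ^ 2 + 2 * (X t ω * B t ω) + (K ^ 2 + 1) := fun ω => by
    rw [hrec]; exact_mod_cast queue_sq_step_le (hBK t ω)
  calc _ = ∫⁻ ω, ((X (t + 1) ω : ℝ≥0∞) ^ 2 + 2 * X t ω) ∂μ := by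
        rw [lintegral_add_left (by fun_prop), lintegral_const_mul _ (by fun_prop)]
    _ ≤ ∫⁻ ω, ((X t ω : ℝ≥0∞) ^ 2 + 2 * (X t ω * B t ω) + (K ^ 2 + 1)) ∂μ :=
        lintegral_mono hpt
    _ = _ := by
        have := hB t
        rw [lintegral_add_right _ measurable_const, lintegral_add_left (by fun_prop),
          lintegral_const_mul _ (by fun_prop), lintegral_const, measure_univ, mul_one]

theorem sum_lintegral_queue_le_of_indepFun {ρ : ℝ≥0∞} (hρ : ρ < 1)
    (hB : ∀ t, Measurable (B t)) (hBK : ∀ t ω, B t ω ≤ K)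
    (hind : ∀ t, IndepFun (X t) (B t) μ) (hmean : ∀ t, ∫⁻ ω, (B t ω : ℝ≥0∞) ∂μ ≤ ρ)
    (hX0 : ∀ ω, X 0 ω = 0) (hrec : ∀ t ω, X (t + 1) ω = X t ω - 1 + B t ω) (T : ℕ) :
    ∑ t ∈ Finset.range T, ∫⁻ ω, (X t ω : ℝ≥0∞) ∂μ ≤ (K ^ 2 + 1) / (2 * (1 - ρ)) * T := by
  have hX := measurable_queue hB hX0 hrec
  have hfin : ∀ t, ∫⁻ ω, (X t ω : ℝ≥0∞) ∂μ ≠ ⊤ := fun t =>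
    ne_top_of_le_ne_top (ENNReal.natCast_ne_top (K * t)) <| by
      calc _ ≤ ∫⁻ _, ((K * t : ℕ) : ℝ≥0∞) ∂μ :=
            lintegral_mono fun ω => Nat.cast_le.2 (queue_le_mul hBK hX0 hrec t ω)
        _ = _ := by simp
  have hcross : ∀ t, ∫⁻ ω, (X t ω : ℝ≥0∞) * B t ω ∂μ ≤ ρ * ∫⁻ ω, (X t ω : ℝ≥0∞) ∂μ := by
    intro t
    have hcast : Measurable (fun n : ℕ => (n : ℝ≥0∞)) := measurable_of_countable _
    have h := lintegral_mul_eq_lintegral_mul_lintegral_of_indepFun (hcast.comp (hX t))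
      (hcast.comp (hB t)) ((hind t).comp hcast hcast)
    simp only [Pi.mul_apply, Function.comp_apply] at h
    rw [h, mul_comm]
    gcongr
    exact hmean t
  refine sum_le_div_mul_of_drift (V := fun t => ∫⁻ ω, (X t ω : ℝ≥0∞) ^ 2 ∂μ)
    (two_mul_one_sub_ne_zero hρ)
    (ENNReal.mul_ne_top ENNReal.ofNat_ne_top (ENNReal.sub_ne_top ENNReal.one_ne_top))
    (by simp [hX0]) (fun t => ?_) T
  have hsplit : 2 * (1 - ρ) * ∫⁻ ω, (X t ω : ℝ≥0∞) ∂μ + 2 * ρ * ∫⁻ ω, (X t ω : ℝ≥0∞) ∂μ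
      = 2 * ∫⁻ ω, (X t ω : ℝ≥0∞) ∂μ := by
    rw [← add_mul, ← mul_add, tsub_add_cancel_of_le hρ.le, mul_one]
  have h2ρe : 2 * ρ * ∫⁻ ω, (X t ω : ℝ≥0∞) ∂μ ≠ ⊤ :=
    ENNReal.mul_ne_top (ENNReal.mul_ne_top ENNReal.ofNat_ne_top (ne_top_of_lt hρ)) (hfin t)
  rw [← ENNReal.add_le_add_iff_right h2ρe, add_assoc, hsplit]
  calc _ ≤ _ := lintegral_queue_sq_add_le hB hBK hX0 hrec t
    _ ≤ _ := by grw [hcross t]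
    _ = _ := by ring

end Queue

section Arrivals

variable {Ω ι : Type*}

abbrev arrivalsDuring (A : ι → ℕ → Ω → ℕ) (S : Set ℕ) : MeasurableSpace Ω :=
  ⨆ p ∈ Prod.snd ⁻¹' S, MeasurableSpace.comap (A p.1 p.2) inferInstance

variable {A : ι → ℕ → Ω → ℕ}

theorem measurable_arrivalsDuring {S : Set ℕ} {s : ℕ} (hs : s ∈ S) (i : ι) :
    Measurable[arrivalsDuring A S] (A i s) :=
  measurable_iff_comap_le.2 <|
    le_iSup₂ (f := fun p (_ : p ∈ Prod.snd ⁻¹' S) => MeasurableSpace.comap (A p.1 p.2) _) (i, s) hs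

theorem arrivalsDuring_mono {S T : Set ℕ} (h : S ⊆ T) : arrivalsDuring A S ≤ arrivalsDuring A T :=
  biSup_mono fun _ hp => h hp

variable {X B : ℕ → Ω → ℕ}

theorem measurable_arrivalsDuring_Iio_of_queue (hB : ∀ t, Measurable[arrivalsDuring A {t}] (B t))
    (hX0 : ∀ ω, X 0 ω = 0) (hrec : ∀ t ω, X (t + 1) ω = X t ω - 1 + B t ω) (t : ℕ) :
    Measurable[arrivalsDuring A (Set.Iio t)] (X t) := by
  induction t with
  | zero => simp only [funext hX0]; exact measurable_const
  | succ t ih =>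
    have hXt := ih.mono (arrivalsDuring_mono (Set.Iio_subset_Iio t.le_succ)) le_rfl
    have hBt := (hB t).mono (arrivalsDuring_mono (T := Set.Iio (t + 1)) (by simp)) le_rfl
    simp only [funext (hrec t)]
    fun_prop

variable [m : MeasurableSpace Ω]

theorem arrivalsDuring_le (hA : ∀ i t, Measurable (A i t)) (S : Set ℕ) :
    arrivalsDuring A S ≤ m :=
  iSup₂_le fun p _ => (hA p.1 p.2).comap_le

theorem indepFun_of_measurable_arrivalsDuring {μ : Measure Ω} {β γ : Type*} [MeasurableSpace β]
    [MeasurableSpace γ] (hA : ∀ i t, Measurable (A i t))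
    (hind : iIndepFun (fun p : ι × ℕ => A p.1 p.2) μ) {S T : Set ℕ} (hST : Disjoint S T)
    {f : Ω → β} {g : Ω → γ} (hf : Measurable[arrivalsDuring A S] f)
    (hg : Measurable[arrivalsDuring A T] g) : IndepFun f g μ := by
  have hST' := indep_iSup_of_disjoint (fun p : ι × ℕ => (hA p.1 p.2).comap_le)
    ((iIndepFun_iff_iIndep _ _ _).1 hind) (hST.preimage Prod.snd)
  exact (IndepFun_iff_Indep f g μ).2 (indep_of_indep_of_le hST' hf.comap_le hg.comap_le)

theorem sum_lintegral_queue_le {μ : Measure Ω} [IsProbabilityMeasure μ] {K : ℕ} {ρ : ℝ≥0∞}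
    (hρ : ρ < 1) (hA : ∀ i t, Measurable (A i t))
    (hind : iIndepFun (fun p : ι × ℕ => A p.1 p.2) μ)
    (hB : ∀ t, Measurable[arrivalsDuring A {t}] (B t)) (hBK : ∀ t ω, B t ω ≤ K)
    (hmean : ∀ t, ∫⁻ ω, (B t ω : ℝ≥0∞) ∂μ ≤ ρ)
    (hX0 : ∀ ω, X 0 ω = 0) (hrec : ∀ t ω, X (t + 1) ω = X t ω - 1 + B t ω) (T : ℕ) :
    ∑ t ∈ Finset.range T, ∫⁻ ω, (X t ω : ℝ≥0∞) ∂μ ≤ (K ^ 2 + 1) / (2 * (1 - ρ)) * T :=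
  sum_lintegral_queue_le_of_indepFun hρ (fun t => (hB t).mono (arrivalsDuring_le hA _) le_rfl)
    hBK (fun t => indepFun_of_measurable_arrivalsDuring hA hind
      (S := Set.Iio t) (Set.disjoint_singleton_right.2 Set.self_notMem_Iio)
      (measurable_arrivalsDuring_Iio_of_queue hB hX0 hrec t) (hB t))
    hmean hX0 hrec T

end Arrivals

theorem lintegral_natCast_eq_measure_eq_one {Ω : Type*} [MeasurableSpace Ω] {μ : Measure Ω}
    {f : Ω → ℕ} (hf : Measurable f) (h01 : ∀ ω, f ω ≤ 1) :
    ∫⁻ ω, (f ω : ℝ≥0∞) ∂μ = μ {ω | f ω = 1} := by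
  have hind : (fun ω => (f ω : ℝ≥0∞)) = {ω | f ω = 1}.indicator 1 := by
    funext ω
    rcases Nat.le_one_iff_eq_zero_or_eq_one.1 (h01 ω) with h | h <;> simp [Set.indicator, h]
  rw [hind]
  exact lintegral_indicator_one (hf (measurableSet_singleton 1))

theorem sum_lintegral_pair_queue_le {Ω ι : Type*} [MeasurableSpace Ω] {μ : Measure Ω}
    [IsProbabilityMeasure μ] {lam : ι → ℝ} (hlam : ∀ i, 0 ≤ lam i) {A : ι → ℕ → Ω → ℕ}
    (hA : ∀ i t, Measurable (A i t)) (hA01 : ∀ i t ω, A i t ω ≤ 1)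
    (hArate : ∀ i t, μ {ω | A i t ω = 1} = ENNReal.ofReal (lam i))
    (hind : iIndepFun (fun p : ι × ℕ => A p.1 p.2) μ) {i j : ι} (hij : lam i + lam j < 1)
    {X : ℕ → Ω → ℕ} (hX0 : ∀ ω, X 0 ω = 0)
    (hrec : ∀ t ω, X (t + 1) ω = X t ω - 1 + (A i t ω + A j t ω)) (T : ℕ) :
    ∑ t ∈ Finset.range T, ∫⁻ ω, (X t ω : ℝ≥0∞) ∂μ
      ≤ 5 / (2 * (1 - ENNReal.ofReal (lam i + lam j))) * T := by
  have hmean : ∀ t, ∫⁻ ω, ((A i t ω + A j t ω : ℕ) : ℝ≥0∞) ∂μ = ENNReal.ofReal (lam i + lam j) :=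
    fun t => by
      have := hA i t
      push_cast
      rw [lintegral_add_left (by fun_prop), lintegral_natCast_eq_measure_eq_one (hA i t) (hA01 i t),
        lintegral_natCast_eq_measure_eq_one (hA j t) (hA01 j t), hArate, hArate,
        ENNReal.ofReal_add (hlam i) (hlam j)]
  have hle : ∀ t ω, A i t ω + A j t ω ≤ 2 := fun t ω => by
    have := hA01 i t ω; have := hA01 j t ω; omega
  have hmeas : ∀ t, Measurable[arrivalsDuring A {t}] (fun ω => A i t ω + A j t ω) := fun t => by
    have hi := measurable_arrivalsDuring (A := A) (Set.mem_singleton t) i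
    have hj := measurable_arrivalsDuring (A := A) (Set.mem_singleton t) j
    exact hi.add hj
  convert sum_lintegral_queue_le (ENNReal.ofReal_lt_one.2 hij) hA hind hmeas hle
    (fun t => (hmean t).le) hX0 hrec T using 3
  norm_num

theorem sum_lintegral_fin_three_le {Ω : Type*} [MeasurableSpace Ω] (μ : Measure Ω)
    (f : Fin 3 → Ω → ℝ≥0∞) :
    ∑ i, ∫⁻ ω, f i ω ∂μ ≤ ∫⁻ ω, (f 0 ω + f 1 ω) ∂μ + ∫⁻ ω, (f 1 ω + f 2 ω) ∂μ := by
  rw [Fin.sum_univ_three]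
  refine le_trans ?_ (add_le_add (le_lintegral_add _ _) (le_lintegral_add _ _))
  gcongr
  exact le_add_self

/-- Throughput optimality of π̃_IQ for the 3-queue path graph. -/
theorem piIQtilde_throughput_optimal
    {Ω : Type*} [MeasurableSpace Ω] (μ : Measure Ω) [IsProbabilityMeasure μ]
    (lam : Fin 3 → ℝ) (hlam : ∀ i, 0 ≤ lam i ∧ lam i ≤ 1)
    (hcap1 : lam 0 + lam 1 < 1) (hcap2 : lam 1 + lam 2 < 1)
    (A : Fin 3 → ℕ → Ω → ℕ)
    (hAmeas : ∀ i t, Measurable (A i t))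
    (hA01 : ∀ i t ω, A i t ω ≤ 1)
    (hArate : ∀ i t, μ {ω | A i t ω = 1} = ENNReal.ofReal (lam i))
    (hAindep : iIndepFun
      (fun p : Fin 3 × ℕ => fun ω => A p.1 p.2 ω) μ)
    (Q : ℕ → Fin 3 → Ω → ℕ)
    (hQ0 : ∀ i ω, Q 0 i ω = 0)
    (hQevol : ∀ t i ω,
      Q (t + 1) i ω = Q t i ω - piIQtilde (fun j => Q t j ω) i + A i t ω) :
    limsup (fun T : ℕ =>
        (∑ t ∈ Finset.range T, ∑ i, ∫⁻ ω, (Q t i ω : ℝ≥0∞) ∂μ) / (T : ℝ≥0∞))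
      atTop < ⊤ := by
  have hC : ∀ {i j}, lam i + lam j < 1 → 5 / (2 * (1 - ENNReal.ofReal (lam i + lam j))) ≠ ⊤ :=
    fun hij => ENNReal.div_ne_top (by simp) (two_mul_one_sub_ne_zero (ENNReal.ofReal_lt_one.2 hij))
  have h01 := sum_lintegral_pair_queue_le (fun i => (hlam i).1) hAmeas hA01 hArate hAindep hcap1
    (X := fun t ω => Q t 0 ω + Q t 1 ω) (by simp [hQ0]) fun t ω => by
      simp only [hQevol]; have := piIQtilde_serves_pair01 (fun j => Q t j ω); omega
  have h12 := sum_lintegral_pair_queue_le (fun i => (hlam i).1) hAmeas hA01 hArate hAindep hcap2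
    (X := fun t ω => Q t 1 ω + Q t 2 ω) (by simp [hQ0]) fun t ω => by
      simp only [hQevol]; have := piIQtilde_serves_pair12 (fun j => Q t j ω); omega
  simp only [Nat.cast_add] at h01 h12
  refine limsup_sum_div_lt_top (ENNReal.add_ne_top.2 ⟨hC hcap1, hC hcap2⟩) fun T => ?_
  grw [Finset.sum_le_sum fun t _ => sum_lintegral_fin_three_le μ fun i ω => (Q t i ω : ℝ≥0∞),
    Finset.sum_add_distrib, h01, h12, ← add_mul]
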